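/- Let R be an algebraic curvature tensor on ℝⁿ with nonnegative isotropic curvature, attaining the value 0 at an orthonormal four-frame {e₁,e₂,e₃,e₄}. Then the first-variation identity R₁₂₁₃ + R₁₂₄₂ + R₃₄₁₃ + R₃₄₄₂ = 0 holds (obtained by rotating in the (e₂,e₃)-plane). -/

import Mathlib

/-!
Rotating the frame by an angle `s` in the `(e₂, e₃)`-plane keeps it orthonormal, and the isotropic
curvature `F s` of the rotated frame is `cos² s · F 0 + sin² s · F (π/2) + 2 sin s cos s · G`, where
`G` is the left-hand side of the identity. As `F ≥ 0` and `F 0 = 0`, `F` has a local minimum at `0`,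
so `F' 0 = 2 G` vanishes.
-/

noncomputable section
open scoped BigOperators

def dotp {n : ℕ} (X Y : Fin n → ℝ) : ℝ := ∑ i, X i * Y i

def ON4 {n : ℕ} (e₁ e₂ e₃ e₄ : Fin n → ℝ) : Prop :=
  dotp e₁ e₁ = 1 ∧ dotp e₂ e₂ = 1 ∧ dotp e₃ e₃ = 1 ∧ dotp e₄ e₄ = 1 ∧
  dotp e₁ e₂ = 0 ∧ dotp e₁ e₃ = 0 ∧ dotp e₁ e₄ = 0 ∧
  dotp e₂ e₃ = 0 ∧ dotp e₂ e₄ = 0 ∧ dotp e₃ e₄ = 0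

def isoCurv {n : ℕ} (R : MultilinearMap ℝ (fun _ : Fin 4 => (Fin n → ℝ)) ℝ)
    (e₁ e₂ e₃ e₄ : Fin n → ℝ) : ℝ :=
  R ![e₁, e₃, e₁, e₃] + R ![e₁, e₄, e₁, e₄] + R ![e₂, e₃, e₂, e₃]
    + R ![e₂, e₄, e₂, e₄] - 2 * R ![e₁, e₂, e₃, e₄]

open Real

section Multilinear

variable {E : Type*} [AddCommGroup E] [Module ℝ E] (R : MultilinearMap ℝ (fun _ : Fin 4 => E) ℝ)

theorem map_smul_add_smul₀ (u v b c d : E) (x y : ℝ) :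
    R ![x • u + y • v, b, c, d] = x * R ![u, b, c, d] + y * R ![v, b, c, d] := by
  have h (w : E) : ![w, b, c, d] = Function.update ![u, b, c, d] 0 w := by
    ext i; fin_cases i <;> rfl
  rw [h, R.map_update_add, R.map_update_smul, R.map_update_smul, ← h, ← h, smul_eq_mul, smul_eq_mul]

theorem map_smul_add_smul₁ (a u v c d : E) (x y : ℝ) :
    R ![a, x • u + y • v, c, d] = x * R ![a, u, c, d] + y * R ![a, v, c, d] := by
  have h (w : E) : ![a, w, c, d] = Function.update ![a, u, c, d] 1 w := by
    ext i; fin_cases i <;> rfl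
  rw [h, R.map_update_add, R.map_update_smul, R.map_update_smul, ← h, ← h, smul_eq_mul, smul_eq_mul]

theorem map_smul_add_smul₂ (a b u v d : E) (x y : ℝ) :
    R ![a, b, x • u + y • v, d] = x * R ![a, b, u, d] + y * R ![a, b, v, d] := by
  have h (w : E) : ![a, b, w, d] = Function.update ![a, b, u, d] 2 w := by
    ext i; fin_cases i <;> rfl
  rw [h, R.map_update_add, R.map_update_smul, R.map_update_smul, ← h, ← h, smul_eq_mul, smul_eq_mul]

theorem map_smul_add_smul₃ (a b c u v : E) (x y : ℝ) :
    R ![a, b, c, x • u + y • v] = x * R ![a, b, c, u] + y * R ![a, b, c, v] := by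
  have h (w : E) : ![a, b, c, w] = Function.update ![a, b, c, u] 3 w := by
    ext i; fin_cases i <;> rfl
  rw [h, R.map_update_add, R.map_update_smul, R.map_update_smul, ← h, ← h, smul_eq_mul, smul_eq_mul]

end Multilinear

section CurvatureSymmetries

variable {E : Type*} [AddCommGroup E] [Module ℝ E] {R : MultilinearMap ℝ (fun _ : Fin 4 => E) ℝ}

theorem map_self_left (hanti : ∀ X Y Z W, R ![X, Y, Z, W] = - R ![Y, X, Z, W]) (X Z W : E) :
    R ![X, X, Z, W] = 0 := by
  linarith [hanti X X Z W]

theorem map_self_right (hanti : ∀ X Y Z W, R ![X, Y, Z, W] = - R ![Y, X, Z, W])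
    (hpair : ∀ X Y Z W, R ![X, Y, Z, W] = R ![Z, W, X, Y]) (X Y Z : E) :
    R ![X, Y, Z, Z] = 0 := by
  rw [hpair, map_self_left hanti]

theorem map_swap_right (hanti : ∀ X Y Z W, R ![X, Y, Z, W] = - R ![Y, X, Z, W])
    (hpair : ∀ X Y Z W, R ![X, Y, Z, W] = R ![Z, W, X, Y]) (X Y Z W : E) :
    R ![X, Y, Z, W] = - R ![X, Y, W, Z] := by
  rw [hpair X Y Z W, hanti Z W X Y, hpair W Z X Y]

end CurvatureSymmetries

theorem hasDerivAt_cos_sq_mul_add_sin_sq_mul_add_sin_mul_cos_mul (a b c s : ℝ) :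
    HasDerivAt (fun s => cos s ^ 2 * a + sin s ^ 2 * b + 2 * sin s * cos s * c)
      (2 * sin s * cos s * (b - a) + 2 * (cos s ^ 2 - sin s ^ 2) * c) s :=
  ((((hasDerivAt_cos s).pow 2).mul_const a).add (((hasDerivAt_sin s).pow 2).mul_const b)).add
    ((((hasDerivAt_sin s).const_mul 2).mul (hasDerivAt_cos s)).mul_const c) |>.congr_deriv (by ring)

theorem dotp_eq_dotProduct {n : ℕ} (X Y : Fin n → ℝ) : dotp X Y = X ⬝ᵥ Y := rfl

theorem ON4.rotate₂₃ {n : ℕ} {e₁ e₂ e₃ e₄ : Fin n → ℝ} (he : ON4 e₁ e₂ e₃ e₄) (s : ℝ) :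
    ON4 e₁ (cos s • e₂ - sin s • e₃) (sin s • e₂ + cos s • e₃) e₄ := by
  simp only [ON4, dotp_eq_dotProduct] at he ⊢
  obtain ⟨h11, h22, h33, h44, h12, h13, h14, h23, h24, h34⟩ := he
  have h32 : e₃ ⬝ᵥ e₂ = 0 := by rwa [dotProduct_comm]
  refine ⟨h11, ?_, ?_, h44, ?_, ?_, h14, ?_, ?_, ?_⟩ <;>
    simp only [dotProduct_add, dotProduct_sub, dotProduct_smul, add_dotProduct, sub_dotProduct,
      smul_dotProduct, smul_eq_mul, h12, h13, h22, h23, h24, h32, h33, h34] <;>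
    linarith [sin_sq_add_cos_sq s]

theorem isoCurv_rotate₂₃ {n : ℕ} {R : MultilinearMap ℝ (fun _ : Fin 4 => (Fin n → ℝ)) ℝ}
    (hanti : ∀ X Y Z W, R ![X, Y, Z, W] = - R ![Y, X, Z, W])
    (hpair : ∀ X Y Z W, R ![X, Y, Z, W] = R ![Z, W, X, Y])
    (e₁ e₂ e₃ e₄ : Fin n → ℝ) (s : ℝ) :
    isoCurv R e₁ (cos s • e₂ - sin s • e₃) (sin s • e₂ + cos s • e₃) e₄ =
      cos s ^ 2 * isoCurv R e₁ e₂ e₃ e₄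
        -- the isotropic curvature of the frame rotated by `π / 2`, that is `(e₁, -e₃, e₂, e₄)`
        + sin s ^ 2 * (R ![e₁, e₂, e₁, e₂] + R ![e₁, e₄, e₁, e₄] + R ![e₂, e₃, e₂, e₃]
          + R ![e₃, e₄, e₃, e₄] + 2 * R ![e₁, e₃, e₂, e₄])
        + 2 * sin s * cos s * (R ![e₁, e₂, e₁, e₃] + R ![e₁, e₂, e₄, e₂]
          + R ![e₃, e₄, e₁, e₃] + R ![e₃, e₄, e₄, e₂]) := by
  rw [sub_eq_add_neg, ← neg_smul]
  simp only [isoCurv, map_smul_add_smul₀, map_smul_add_smul₁, map_smul_add_smul₂,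
    map_smul_add_smul₃, map_self_left hanti, map_self_right hanti hpair]
  have h₁ : R ![e₃, e₂, e₃, e₂] = R ![e₂, e₃, e₂, e₃] := by
    rw [hanti, map_swap_right hanti hpair, neg_neg]
  have h₂ : R ![e₂, e₃, e₃, e₂] = -R ![e₂, e₃, e₂, e₃] := map_swap_right hanti hpair _ _ _ _
  have h₃ : R ![e₃, e₂, e₂, e₃] = -R ![e₂, e₃, e₂, e₃] := hanti _ _ _ _
  have h₄ : R ![e₁, e₃, e₁, e₂] = R ![e₁, e₂, e₁, e₃] := hpair _ _ _ _
  have h₅ : R ![e₃, e₄, e₂, e₄] = R ![e₂, e₄, e₃, e₄] := hpair _ _ _ _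
  have h₆ : R ![e₁, e₂, e₄, e₂] = -R ![e₁, e₂, e₂, e₄] := map_swap_right hanti hpair _ _ _ _
  have h₇ : R ![e₃, e₄, e₁, e₃] = R ![e₁, e₃, e₃, e₄] := hpair _ _ _ _
  have h₈ : R ![e₃, e₄, e₄, e₂] = -R ![e₂, e₄, e₃, e₄] := by
    rw [map_swap_right hanti hpair, hpair]
  rw [h₁, h₂, h₃, h₄, h₅, h₆, h₇, h₈]
  linear_combination
    (R ![e₂, e₃, e₂, e₃] * (sin s ^ 2 + cos s ^ 2) - R ![e₁, e₄, e₁, e₄]) * sin_sq_add_cos_sq s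

theorem first_variation_rotation_23 {n : ℕ}
    (R : MultilinearMap ℝ (fun _ : Fin 4 => (Fin n → ℝ)) ℝ)
    (hanti : ∀ X Y Z W, R ![X, Y, Z, W] = - R ![Y, X, Z, W])
    (hpair : ∀ X Y Z W, R ![X, Y, Z, W] = R ![Z, W, X, Y])
    (hnic : ∀ e₁ e₂ e₃ e₄ : Fin n → ℝ, ON4 e₁ e₂ e₃ e₄ →
      0 ≤ isoCurv R e₁ e₂ e₃ e₄)
    (e₁ e₂ e₃ e₄ : Fin n → ℝ) (he : ON4 e₁ e₂ e₃ e₄)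
    (hzero : isoCurv R e₁ e₂ e₃ e₄ = 0) :
    R ![e₁, e₂, e₁, e₃] + R ![e₁, e₂, e₄, e₂]
      + R ![e₃, e₄, e₁, e₃] + R ![e₃, e₄, e₄, e₂] = 0 := by
  have hmin : IsLocalMin
      (fun s => isoCurv R e₁ (cos s • e₂ - sin s • e₃) (sin s • e₂ + cos s • e₃) e₄) 0 :=
    Filter.Eventually.of_forall fun s => by
      simpa [hzero] using hnic _ _ _ _ (he.rotate₂₃ s)
  rw [funext (isoCurv_rotate₂₃ hanti hpair e₁ e₂ e₃ e₄)] at hmin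
  simpa using hmin.hasDerivAt_eq_zero
    (hasDerivAt_cos_sq_mul_add_sin_sq_mul_add_sin_mul_cos_mul _ _ _ 0)
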